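/- Define recursively $q_{n+1}(z) = q_n(z) \cdot q_0(z^{\deg q_n + 1})$ with $q_0(z) = \frac{1}{4}(z^5-z^4+z^2-z)$. Then for every $n \in \mathbb{N}$: $|q_n|_1 = 1$, $q_n(1) = q_n(0) = q_n(-1) = 0$, and $\sup_{z \in \overline{\mathbb{D}}} |q_n(z)| \le \left(\sup_{z \in \overline{\mathbb{D}}} |q_0(z)|\right)^{n+1}$. -/

import Mathlib

/-!
Substituting `X ^ m` with `m > deg f` into `p` and multiplying by `f` lays out the coefficients
of `f`, scaled by the coefficients of `p`, in disjoint blocks of length `m`; hence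
`|f · p(X ^ m)|₁ = |f|₁ |p|₁`, and `|q₀|₁ = (1 + 1 + 1 + 1) / 4 = 1` propagates along the
recursion. The roots `1, 0, -1` of `q₀` are inherited by each `qₙ` through its factor `qₙ₋₁`,
and the sup norm on the closed disc is submultiplicative and does not grow under `z ↦ z ^ m`,
which maps the disc into itself.
-/

open Polynomial

noncomputable def q0P : Polynomial ℂ :=
  Polynomial.C (1 / 4) * (X ^ 5 - X ^ 4 + X ^ 2 - X)

/-- The sum of the absolute values of the coefficients of a polynomial. -/
noncomputable def l1 (f : Polynomial ℂ) : ℝ := ∑ k ∈ f.support, ‖f.coeff k‖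

open Finset

theorem Finset.sum_range_mul_eq_sum_sum {M : Type*} [AddCommMonoid M] (g : ℕ → M) (a m : ℕ) :
    ∑ k ∈ range (a * m), g k = ∑ j ∈ range a, ∑ i ∈ range m, g (j * m + i) := by
  induction a with
  | zero => simp
  | succ a ih => rw [Nat.succ_mul, sum_range_add, ih, sum_range_succ]

theorem l1_eq_sum_range {f : ℂ[X]} {N : ℕ} (h : f.natDegree < N) :
    l1 f = ∑ k ∈ range N, ‖f.coeff k‖ :=
  sum_subset (supp_subset_range h) fun k _ hk => by simp [notMem_support_iff.mp hk]

theorem coeff_mul_comp_X_pow {R : Type*} [CommSemiring R] {f : R[X]} {m : ℕ}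
    (hf : f.natDegree < m) (p : R[X]) (j : ℕ) {i : ℕ} (hi : i < m) :
    (f * p.comp (X ^ m)).coeff (j * m + i) = p.coeff j * f.coeff i := by
  rw [comp, eval₂_eq_sum_range, mul_sum, finsetSum_coeff, sum_eq_single j]
  · rw [← pow_mul, mul_left_comm, coeff_C_mul, mul_comm j m, add_comm, coeff_mul_X_pow]
  · intro k _ hkj
    rw [← pow_mul, mul_left_comm, coeff_C_mul, coeff_mul_X_pow', mul_comm m k]
    split_ifs with hk
    · rw [coeff_eq_zero_of_natDegree_lt (p := f), mul_zero]
      obtain hlt | hlt := Nat.lt_or_gt_of_ne hkj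
      all_goals
        have := Nat.mul_le_mul_right m hlt
        rw [Nat.succ_mul] at this
        omega
    · rw [mul_zero]
  · intro hj
    rw [coeff_eq_zero_of_natDegree_lt (p := p) (by simpa using hj)]
    simp

theorem natDegree_mul_comp_X_pow_lt {R : Type*} [Semiring R] {f : R[X]} {m : ℕ}
    (hf : f.natDegree < m) (p : R[X]) :
    (f * p.comp (X ^ m)).natDegree < (p.natDegree + 1) * m := by
  calc (f * p.comp (X ^ m)).natDegree ≤ f.natDegree + (p.comp (X ^ m)).natDegree :=
        natDegree_mul_le
    _ ≤ f.natDegree + p.natDegree * (X ^ m : R[X]).natDegree := by grw [natDegree_comp_le]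
    _ ≤ f.natDegree + p.natDegree * m := by grw [natDegree_X_pow_le]
    _ < (p.natDegree + 1) * m := by rw [Nat.succ_mul]; omega

theorem l1_mul_comp_X_pow {f : ℂ[X]} {m : ℕ} (hf : f.natDegree < m) (p : ℂ[X]) :
    l1 (f * p.comp (X ^ m)) = l1 f * l1 p := by
  rw [l1_eq_sum_range (natDegree_mul_comp_X_pow_lt hf p), sum_range_mul_eq_sum_sum,
    l1_eq_sum_range hf, l1_eq_sum_range (Nat.lt_succ_self p.natDegree), sum_mul_sum, sum_comm]
  refine sum_congr rfl fun i hi => sum_congr rfl fun j _ => ?_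
  rw [coeff_mul_comp_X_pow hf p j (mem_range.mp hi), norm_mul, mul_comm]

theorem natDegree_q0P : q0P.natDegree = 5 := by
  rw [q0P, natDegree_C_mul (by norm_num)]
  compute_degree!

theorem l1_q0P : l1 q0P = 1 := by
  rw [l1_eq_sum_range (N := 6) (by rw [natDegree_q0P]; norm_num)]
  norm_num [q0P, sum_range_succ, coeff_X_pow, coeff_X]

noncomputable def discSup (p : ℂ[X]) : ℝ := ⨆ z : Metric.closedBall (0 : ℂ) 1, ‖p.eval (z : ℂ)‖

theorem bddAbove_norm_eval_closedBall (p : ℂ[X]) :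
    BddAbove (Set.range fun z : Metric.closedBall (0 : ℂ) 1 => ‖p.eval (z : ℂ)‖) :=
  (isCompact_range (by fun_prop)).bddAbove

theorem norm_eval_le_discSup (p : ℂ[X]) {z : ℂ} (hz : z ∈ Metric.closedBall (0 : ℂ) 1) :
    ‖p.eval z‖ ≤ discSup p :=
  le_ciSup (bddAbove_norm_eval_closedBall p) (⟨z, hz⟩ : Metric.closedBall (0 : ℂ) 1)

theorem discSup_nonneg (p : ℂ[X]) : 0 ≤ discSup p :=
  (norm_nonneg _).trans (norm_eval_le_discSup p (Metric.mem_closedBall_self zero_le_one))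

theorem discSup_le {p : ℂ[X]} {c : ℝ} (h : ∀ z ∈ Metric.closedBall (0 : ℂ) 1, ‖p.eval z‖ ≤ c) :
    discSup p ≤ c :=
  ciSup_le fun z => h z z.2

theorem discSup_mul_le (p r : ℂ[X]) : discSup (p * r) ≤ discSup p * discSup r :=
  discSup_le fun z hz => by
    rw [eval_mul, norm_mul]
    exact mul_le_mul (norm_eval_le_discSup p hz) (norm_eval_le_discSup r hz) (norm_nonneg _)
      (discSup_nonneg p)

theorem discSup_comp_X_pow_le (p : ℂ[X]) (m : ℕ) : discSup (p.comp (X ^ m)) ≤ discSup p :=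
  discSup_le fun z hz => by
    rw [eval_comp, eval_pow, eval_X]
    refine norm_eval_le_discSup p ?_
    simp only [mem_closedBall_zero_iff, norm_pow] at hz ⊢
    exact pow_le_one₀ (norm_nonneg z) hz

theorem stmt_5 (q : ℕ → Polynomial ℂ) (h0 : q 0 = q0P)
    (hrec : ∀ n, q (n + 1) = q n * q0P.comp (X ^ ((q n).natDegree + 1))) :
    ∀ n : ℕ, l1 (q n) = 1 ∧
      (q n).eval 1 = 0 ∧ (q n).eval 0 = 0 ∧ (q n).eval (-1) = 0 ∧
      (⨆ z : Metric.closedBall (0 : ℂ) 1, ‖(q n).eval (z : ℂ)‖) ≤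
        (⨆ z : Metric.closedBall (0 : ℂ) 1, ‖q0P.eval (z : ℂ)‖) ^ (n + 1) := by
  intro n
  induction n with
  | zero =>
    rw [h0, zero_add, pow_one]
    exact ⟨l1_q0P, by simp [q0P], by simp [q0P], by norm_num [q0P], le_rfl⟩
  | succ n ih =>
    obtain ⟨hl1, hone, hzero, hnegone, hsup⟩ := ih
    rw [hrec n]
    refine ⟨?_, by simp [hone], by simp [hzero], by simp [hnegone], ?_⟩
    · rw [l1_mul_comp_X_pow (Nat.lt_succ_self _), hl1, l1_q0P, one_mul]
    · calc discSup (q n * q0P.comp (X ^ ((q n).natDegree + 1)))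
          ≤ discSup (q n) * discSup (q0P.comp (X ^ ((q n).natDegree + 1))) := discSup_mul_le _ _
        _ ≤ discSup q0P ^ (n + 1) * discSup q0P :=
          mul_le_mul hsup (discSup_comp_X_pow_le _ _) (discSup_nonneg _)
            (pow_nonneg (discSup_nonneg _) _)
        _ = discSup q0P ^ (n + 1 + 1) := (pow_succ _ _).symm
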